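/- Let X be a closed smooth manifold, A a proper subring of ℝ, and (ω, φ) an (A,k)-pair with e(ω) = ∅. If z̃, z' ∈ Z_{k-1}(X) and c̃, c ∈ C_k(X) satisfy z̃ + ∂c̃ = ∂c + z', with |z̃| ∩ e(φ) = ∅ and |z'| ∩ e(φ) = ∅, then (∫_{c̃} ω + ∫_{z̃} φ) − (∫_c ω + ∫_{z'} φ) = R[(ω,φ), c̃ − c] ∈ A; hence the value of s(φ) on a cycle is independent of the chosen decomposition. -/

import Mathlib

open scoped Manifold

/-- Abstract (smooth) singular chain complex with supports on a space `X`: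
`C j` plays the role of the group `C_j(X)` of smooth singular `j`-chains, `bd` is the
boundary operator `∂`, `supp` is the support `|c|` of a chain, and `cycles j` is the
subgroup `Z_j(X)` of `j`-cycles. -/
structure SingularChains (X : Type) : Type 1 where
  C : ℕ → Type
  [instAddCommGroup : ∀ j, AddCommGroup (C j)]
  bd : ∀ j, C (j + 1) →+ C j
  supp : ∀ j, C j → Set X
  supp_bd : ∀ j (c : C (j + 1)), supp j (bd j c) ⊆ supp (j + 1) c
  supp_add : ∀ j (c₁ c₂ : C j), supp j (c₁ + c₂) ⊆ supp j c₁ ∪ supp j c₂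
  supp_neg : ∀ j (c : C j), supp j (-c) = supp j c
  cycles : ∀ j, AddSubgroup (C j)
  bd_mem_cycles : ∀ j (c : C (j + 1)), bd j c ∈ cycles j

attribute [instance] SingularChains.instAddCommGroup

/-- An `(A, k)`-pair `(ω, φ)` of differential forms with singularities on `X` with
`e(ω) = ∅`, where `k = m + 1`.  Since `e(ω) = ∅`, the `k`-form `ω` can be integrated over
all `k`-chains, which is recorded by the homomorphism `intω : C_k(X) → ℝ`.  The
`(k-1)`-form `φ` has singular set `sing = e(φ)`, a closed nowhere dense set, and can be
integrated over `(k-1)`-chains whose support avoids `e(φ)`; this is recorded by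
`intφ : C_{k-1}(X) → ℝ` (its values on non-admissible chains are irrelevant).  The field
`residue` is the defining condition of an `(A,k)`-pair: for every admissible `k`-chain
`c` (admissibility here reduces to `|∂c| ∩ e(φ) = ∅` since `e(ω) = ∅`), the residue
`R[(ω,φ), c] = ∫_c ω − ∫_{∂c} φ` lies in the subring `A ⊆ ℝ`. -/
structure AkPair {X : Type} [TopologicalSpace X] (S : SingularChains X)
    (A : Subring ℝ) (m : ℕ) : Type 1 where
  intω : S.C (m + 1) →+ ℝ
  sing : Set X
  sing_closed : IsClosed sing
  sing_nowhereDense : IsNowhereDense sing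
  intφ : S.C m →+ ℝ
  residue : ∀ c : S.C (m + 1), S.supp m (S.bd m c) ∩ sing = ∅ →
    intω c - intφ (S.bd m c) ∈ A

/-! Subtracting the two decompositions gives `∂(c̃ − c) = z' − z̃`, whose support avoids
`e(φ)`. So `c̃ − c` is admissible, and the difference of the two values is exactly its
residue, which lies in `A`. -/

namespace SingularChains

variable {X : Type} (S : SingularChains X) {j : ℕ}

theorem supp_sub (c₁ c₂ : S.C j) : S.supp j (c₁ - c₂) ⊆ S.supp j c₁ ∪ S.supp j c₂ := by
  simpa only [sub_eq_add_neg, S.supp_neg] using S.supp_add j c₁ (-c₂)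

theorem supp_sub_inter_eq_empty {c₁ c₂ : S.C j} {E : Set X}
    (h₁ : S.supp j c₁ ∩ E = ∅) (h₂ : S.supp j c₂ ∩ E = ∅) :
    S.supp j (c₁ - c₂) ∩ E = ∅ :=
  Set.subset_eq_empty (Set.inter_subset_inter_left E (S.supp_sub c₁ c₂))
    (by rw [Set.union_inter_distrib_right, h₁, h₂, Set.union_empty])

theorem bd_sub_eq_of_add_bd_eq {z z' : S.C j} {c c' : S.C (j + 1)}
    (h : z + S.bd j c = S.bd j c' + z') : S.bd j (c - c') = z' - z := by
  rw [map_sub]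
  linear_combination (norm := abel) h

end SingularChains

namespace AkPair

variable {X : Type} [TopologicalSpace X] {S : SingularChains X} {A : Subring ℝ} {m : ℕ}
  (P : AkPair S A m)

/-- `∫_c ω + ∫_z φ`, the value of `s(φ)` computed from a decomposition of a cycle as
`z + ∂c` with `|z|` avoiding `e(φ)`. -/
def decompositionValue (c : S.C (m + 1)) (z : S.C m) : ℝ :=
  P.intω c + P.intφ z

theorem decompositionValue_sub_eq_residue {z z' : S.C m} {c c' : S.C (m + 1)}
    (h : z + S.bd m c = S.bd m c' + z') :
    P.decompositionValue c z - P.decompositionValue c' z'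
      = P.intω (c - c') - P.intφ (S.bd m (c - c')) := by
  rw [decompositionValue, decompositionValue, S.bd_sub_eq_of_add_bd_eq h, map_sub, map_sub]
  ring

theorem residue_mem_of_add_bd_eq {z z' : S.C m} {c c' : S.C (m + 1)}
    (hz : S.supp m z ∩ P.sing = ∅) (hz' : S.supp m z' ∩ P.sing = ∅)
    (h : z + S.bd m c = S.bd m c' + z') :
    P.intω (c - c') - P.intφ (S.bd m (c - c')) ∈ A :=
  P.residue (c - c') <| by
    rw [S.bd_sub_eq_of_add_bd_eq h]
    exact S.supp_sub_inter_eq_empty hz' hz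

end AkPair

theorem sPhi_value_independent_of_decomposition_general
    {m : ℕ} (X : Type) [TopologicalSpace X]
    (A : Subring ℝ)
    (S : SingularChains X) (P : AkPair S A m)
    (zt z' : S.C m) (ct c : S.C (m + 1))
    (hsupp_zt : S.supp m zt ∩ P.sing = ∅)
    (hsupp_z' : S.supp m z' ∩ P.sing = ∅)
    (heq : zt + S.bd m ct = S.bd m c + z') :
    (P.intω ct + P.intφ zt) - (P.intω c + P.intφ z')
        = P.intω (ct - c) - P.intφ (S.bd m (ct - c))
      ∧ (P.intω ct + P.intφ zt) - (P.intω c + P.intφ z') ∈ A := by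
  have hvalue := P.decompositionValue_sub_eq_residue heq
  exact ⟨hvalue, hvalue ▸ P.residue_mem_of_add_bd_eq hsupp_zt hsupp_z' heq⟩

/-- Independence of the value of `s(φ)` of the chosen decomposition.  Let `X` be a closed
smooth manifold, `A` a proper subring of `ℝ`, and `(ω, φ)` an `(A, k)`-pair with
`e(ω) = ∅` (here `k = m + 1`).  If `z̃, z' ∈ Z_{k-1}(X)` and `c̃, c ∈ C_k(X)` satisfy
`z̃ + ∂c̃ = ∂c + z'`, with `|z̃| ∩ e(φ) = ∅` and `|z'| ∩ e(φ) = ∅`, then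
`(∫_{c̃} ω + ∫_{z̃} φ) − (∫_c ω + ∫_{z'} φ) = R[(ω,φ), c̃ − c] ∈ A`,
where `R[(ω,φ), c̃ − c] = ∫_{c̃ − c} ω − ∫_{∂(c̃ − c)} φ`; hence the value of `s(φ)` on a
cycle is independent of the chosen decomposition. -/
theorem sPhi_value_independent_of_decomposition
    {n m : ℕ} (X : Type) [TopologicalSpace X] [CompactSpace X] [T2Space X]
    [ChartedSpace (EuclideanSpace ℝ (Fin n)) X]
    [IsManifold (𝓡 n) (⊤ : ℕ∞) X]
    (A : Subring ℝ) (hA : A ≠ ⊤)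
    (S : SingularChains X) (P : AkPair S A m)
    (zt z' : S.C m) (ct c : S.C (m + 1))
    (hzt : zt ∈ S.cycles m) (hz' : z' ∈ S.cycles m)
    (hsupp_zt : S.supp m zt ∩ P.sing = ∅)
    (hsupp_z' : S.supp m z' ∩ P.sing = ∅)
    (heq : zt + S.bd m ct = S.bd m c + z') :
    (P.intω ct + P.intφ zt) - (P.intω c + P.intφ z')
        = P.intω (ct - c) - P.intφ (S.bd m (ct - c))
      ∧ (P.intω ct + P.intφ zt) - (P.intω c + P.intφ z') ∈ A :=
  sPhi_value_independent_of_decomposition_general X A S P zt z' ct c hsupp_zt hsupp_z' heq
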